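/- If 0 < μ₁ ≤ μ₂ and δ > 0, then G(μ₁, μ₂δ/μ₁) ≤ G(μ₂, δ). -/

import Mathlib

/-!
Write `G(μ, δ) = exp (μ φ(δ))` with `φ(δ) = δ - (1 + δ) log (1 + δ)`. With `δ' = μ₂δ/μ₁ ≥ δ` and
`m = μ₁δ' = μ₂δ`, the claim becomes `m φ(δ')/δ' ≤ m φ(δ)/δ`. Since `(1 + x) log (1 + x)` is convex
and vanishes at `0`, its slope from the origin increases, so `φ(x)/x = 1 - (1 + x) log (1 + x)/x`
decreases on `(0, ∞)`.
-/

/-- The Chernoff–Hoeffding bound function `G(μ, δ) = (e^δ / (1+δ)^(1+δ))^μ`. -/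
noncomputable def chernoffG (μ δ : ℝ) : ℝ :=
  (Real.exp δ / (1 + δ) ^ (1 + δ)) ^ μ

open Real Set

noncomputable def chernoffExponent (δ : ℝ) : ℝ :=
  δ - (1 + δ) * log (1 + δ)

theorem chernoffG_eq_exp (μ : ℝ) {δ : ℝ} (hδ : -1 < δ) :
    chernoffG μ δ = exp (μ * chernoffExponent δ) := by
  have h : 0 < 1 + δ := by linarith
  rw [chernoffG, rpow_def_of_pos (by positivity), log_div (exp_ne_zero _) (by positivity),
    log_exp, log_rpow h, chernoffExponent, mul_comm]

theorem ConvexOn.monotoneOn_div_self {s : Set ℝ} {f : ℝ → ℝ} (hf : ConvexOn ℝ s f)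
    (hs : 0 ∈ s) (hf₀ : f 0 = 0) : MonotoneOn (fun x ↦ f x / x) (s \ {0}) := by
  rintro x ⟨hxs, hx⟩ y ⟨hys, hy⟩ hxy
  simpa [hf₀] using hf.secant_mono hs hxs hys hx hy hxy

theorem convexOn_one_add_mul_log_one_add :
    ConvexOn ℝ (Ici (-1)) (fun x ↦ (1 + x) * log (1 + x)) := by
  have h := convexOn_mul_log.translate_right (1 : ℝ)
  have hs : (fun z : ℝ ↦ 1 + z) ⁻¹' Ici 0 = Ici (-1) := by
    ext x; simp [neg_le_iff_add_nonneg']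
  rwa [hs] at h

theorem antitoneOn_chernoffExponent_div_self :
    AntitoneOn (fun δ ↦ chernoffExponent δ / δ) (Ioi 0) := by
  intro x (hx : 0 < x) y (hy : 0 < y) hxy
  have hslope : (1 + x) * log (1 + x) / x ≤ (1 + y) * log (1 + y) / y :=
    convexOn_one_add_mul_log_one_add.monotoneOn_div_self (by norm_num) (by simp)
      ⟨mem_Ici.2 (by linarith), hx.ne'⟩ ⟨mem_Ici.2 (by linarith), hy.ne'⟩ hxy
  simp only [chernoffExponent, sub_div, div_self hx.ne', div_self hy.ne']
  linarith

/-- If `0 < μ₁ ≤ μ₂` and `δ > 0`, then `G(μ₁, μ₂δ/μ₁) ≤ G(μ₂, δ)`. -/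
theorem chernoffG_mono (μ₁ μ₂ δ : ℝ) (hμ₁ : 0 < μ₁) (hμ : μ₁ ≤ μ₂) (hδ : 0 < δ) :
    chernoffG μ₁ (μ₂ * δ / μ₁) ≤ chernoffG μ₂ δ := by
  set δ' := μ₂ * δ / μ₁
  have hδδ' : δ ≤ δ' := (le_div_iff₀' hμ₁).2 (mul_le_mul_of_nonneg_right hμ hδ.le)
  have hδ' : 0 < δ' := hδ.trans_le hδδ'
  have hμδ : μ₁ * δ' = μ₂ * δ := mul_div_cancel₀ _ hμ₁.ne'
  rw [chernoffG_eq_exp _ (by linarith), chernoffG_eq_exp _ (by linarith), exp_le_exp]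
  calc μ₁ * chernoffExponent δ' = μ₂ * δ * (chernoffExponent δ' / δ') := by
        rw [← hμδ, mul_assoc, mul_div_cancel₀ _ hδ'.ne']
    _ ≤ μ₂ * δ * (chernoffExponent δ / δ) :=
        mul_le_mul_of_nonneg_left (antitoneOn_chernoffExponent_div_self hδ hδ' hδδ')
          (mul_nonneg (hμ₁.trans_le hμ).le hδ.le)
    _ = μ₂ * chernoffExponent δ := by rw [mul_assoc, mul_div_cancel₀ _ hδ.ne']
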